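/- Let n ≥ 1, α > 1 with (α−1)n ≥ 4, a ≤ 0, k ≥ 0, B ≥ 0, and μ, s ≥ 0. Then (s²μ((α−1)|a| + 2k) + sB + 1) / ((1 + (α−1)μs)·((1 + (α−1)μs) − 4sμ/n)) ≤ sB + 1 + s((α−1)|a| + 2k)/(α−1). -/

import Mathlib

/-!
Write `β = α - 1` and `P = 1 + β μ s`. Since `(α - 1) n ≥ 4`, the correction `4 s μ / n` is at
most `β μ s`, so both factors of the denominator are at least `1` and the left side is at most
`numerator / P`. Expanding `(s B + 1 + s C / β) P` produces the numerator plus nonnegative terms,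
because `s C / β · β μ s = s² μ C`.
-/

lemma mul_div_le_of_le_mul {c β n t : ℝ} (hn : 0 < n) (ht : 0 ≤ t) (h : c ≤ β * n) :
    c * t / n ≤ β * t := by
  rw [div_le_iff₀ hn]
  nlinarith

lemma add_sq_mul_le_mul_one_add {x c β μ s : ℝ} (hx : 0 ≤ x) (hc : 0 ≤ c) (hβ : 0 < β)
    (hμ : 0 ≤ μ) (hs : 0 ≤ s) :
    s ^ 2 * μ * c + x ≤ (x + s * c / β) * (1 + β * μ * s) := by
  have hcancel : s * c / β * (β * μ * s) = s ^ 2 * μ * c := by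
    field_simp
  have hx_mul : 0 ≤ x * (β * μ * s) := by positivity
  have hsc : 0 ≤ s * c / β := by positivity
  nlinarith

theorem stmt3_general (n α a k B μ s : ℝ) (hα : 1 < α) (h : 4 ≤ (α - 1) * n)
    (hk : 0 ≤ k) (hB : 0 ≤ B) (hμ : 0 ≤ μ) (hs : 0 ≤ s) :
    (s ^ 2 * μ * ((α - 1) * |a| + 2 * k) + s * B + 1) /
        ((1 + (α - 1) * μ * s) * ((1 + (α - 1) * μ * s) - 4 * s * μ / n))
      ≤ s * B + 1 + s * ((α - 1) * |a| + 2 * k) / (α - 1) := by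
  have hβ : 0 < α - 1 := by linarith
  have hn : 0 < n := pos_of_mul_pos_right (by linarith) hβ.le
  have hμs : 0 ≤ μ * s := mul_nonneg hμ hs
  have hP : 1 ≤ 1 + (α - 1) * μ * s := by nlinarith
  have hcorr : 4 * s * μ / n ≤ (α - 1) * μ * s := by
    simpa only [mul_assoc, mul_comm s μ] using mul_div_le_of_le_mul hn hμs h
  have hQ : 1 ≤ (1 + (α - 1) * μ * s) - 4 * s * μ / n := by linarith
  calc _ ≤ (s ^ 2 * μ * ((α - 1) * |a| + 2 * k) + s * B + 1) / (1 + (α - 1) * μ * s) :=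
        div_le_div_of_nonneg_left (by positivity) (by linarith)
          (le_mul_of_one_le_right (by linarith) hQ)
    _ ≤ _ := by
        refine div_le_of_le_mul₀ (by linarith) (by positivity) ?_
        rw [add_assoc]
        exact add_sq_mul_le_mul_one_add (by positivity) (by positivity) hβ hμ hs

/-- Inequality (33.13). -/
theorem stmt3 (n α a k B μ s : ℝ) (hn : 1 ≤ n) (hα : 1 < α) (h : 4 ≤ (α - 1) * n)
    (ha : a ≤ 0) (hk : 0 ≤ k) (hB : 0 ≤ B) (hμ : 0 ≤ μ) (hs : 0 ≤ s) :
    (s ^ 2 * μ * ((α - 1) * |a| + 2 * k) + s * B + 1) /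
        ((1 + (α - 1) * μ * s) * ((1 + (α - 1) * μ * s) - 4 * s * μ / n))
      ≤ s * B + 1 + s * ((α - 1) * |a| + 2 * k) / (α - 1) :=
  stmt3_general n α a k B μ s hα h hk hB hμ hs
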